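/- For every one-way (Alice-to-Bob) two-outcome POVM on ℂ²⊗ℂ², the error probability for the ensemble {(1/2, ψ); (1/2, ρ)} is at least 1/8; i.e. ∑_λ [ (1/2)·tr((A_λ ⊗ (I − B_λ))·ψ) + (1/2)·tr((A_λ ⊗ B_λ)·ρ) ] ≥ 1/8. -/

import Mathlib

open Matrix Kronecker
open scoped ComplexOrder

/-- The rank-one matrix `|ψ⟩⟨ψ|` with `(i,j)`-entry `ψ i * conj (ψ j)`. -/
noncomputable def ketbra {n : Type*} (ψ : n → ℂ) : Matrix n n ℂ :=
  Matrix.vecMulVec ψ (star ψ)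

/-- Kronecker product of vectors. -/
noncomputable def vkron {m n : Type*} (a : m → ℂ) (b : n → ℂ) : m × n → ℂ :=
  fun p => a p.1 * b p.2

noncomputable def ket0 : Fin 2 → ℂ := ![1, 0]
noncomputable def ket1 : Fin 2 → ℂ := ![0, 1]
noncomputable def ketP : Fin 2 → ℂ := ![(Real.sqrt 2 : ℂ)⁻¹, (Real.sqrt 2 : ℂ)⁻¹]
noncomputable def ketM : Fin 2 → ℂ := ![(Real.sqrt 2 : ℂ)⁻¹, -(Real.sqrt 2 : ℂ)⁻¹]

/-- `ψ = |00⟩⟨00|`. -/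
noncomputable def ψState : Matrix (Fin 2 × Fin 2) (Fin 2 × Fin 2) ℂ :=
  ketbra (vkron ket0 ket0)

/-- `ρ = (1/2)(|++⟩⟨++| + |--⟩⟨--|)`. -/
noncomputable def ρState : Matrix (Fin 2 × Fin 2) (Fin 2 × Fin 2) ℂ :=
  (1/2 : ℂ) • (ketbra (vkron ketP ketP) + ketbra (vkron ketM ketM))

/-- Error probability of a one-way (Alice-to-Bob) two-outcome POVM `{(A_λ, B_λ)}` for the
ensemble `{(1/2, ψ); (1/2, ρ)}`. -/
noncomputable def errOneWay {Λ : Type*} [Fintype Λ]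
    (A B : Λ → Matrix (Fin 2) (Fin 2) ℂ) : ℝ :=
  (∑ l, ((1/2 : ℂ) * (((A l) ⊗ₖ (1 - B l)) * ψState).trace
      + (1/2 : ℂ) * (((A l) ⊗ₖ (B l)) * ρState).trace)).re

/-- Key polynomial inequality. -/
lemma key_ineq (al be de e f g : ℝ) (h1 : 0 ≤ al) (h2 : 0 ≤ de) (h3 : be^2 ≤ al*de)
    (h4 : 0 ≤ e) (h5 : e ≤ 1) (h6 : 0 ≤ g) (h7 : g ≤ 1)
    (h8 : f^2 ≤ e*g) (h9 : f^2 ≤ (1-e)*(1-g)) :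
    al ≤ 4*al*(1-e) + (al+de)*(e+g) + 4*be*f := by
  have L1 : 4*f^2 ≤ (3-3*e+g)*(e+g) := by
    nlinarith [sq_nonneg (e+g-1), sq_nonneg (e-g), mul_nonneg h4 h6,
      mul_nonneg (sub_nonneg.2 h5) (sub_nonneg.2 h7), sq_nonneg f]
  set X := al*(3-3*e+g) with hXdef
  set Y := de*(e+g) with hYdef
  have hX : 0 ≤ X := mul_nonneg h1 (by linarith)
  have hY : 0 ≤ Y := mul_nonneg h2 (by linarith)
  have hsq : (4*be*f)^2 ≤ 4*X*Y := by
    have h16 : 16*(be^2*f^2) ≤ 16*(al*de*f^2) := by nlinarith [sq_nonneg f]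
    have h17 : 16*(al*de*f^2) ≤ 4*(al*de)*((3-3*e+g)*(e+g)) := by nlinarith [mul_nonneg h1 h2]
    calc (4*be*f)^2 = 16*(be^2*f^2) := by ring
    _ ≤ 16*(al*de*f^2) := h16
    _ ≤ 4*(al*de)*((3-3*e+g)*(e+g)) := h17
    _ = 4*X*Y := by rw [hXdef, hYdef]; ring
  have key : 0 ≤ X + Y + 4*be*f := by nlinarith [sq_nonneg (X - Y), sq_nonneg (X+Y)]
  have hrw : 4*al*(1-e) + (al+de)*(e+g) + 4*be*f - al = X + Y + 4*be*f := by
    rw [hXdef, hYdef]; ring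
  linarith

lemma trace_psi (M C : Matrix (Fin 2) (Fin 2) ℂ) :
    ((M ⊗ₖ C) * ψState).trace = M 0 0 * C 0 0 := by
  simp [ψState, ketbra, vkron, ket0, Matrix.trace, Matrix.mul_apply, Matrix.vecMulVec_apply,
    Fintype.sum_prod_type, Fin.sum_univ_two, Matrix.kroneckerMap_apply, Matrix.diag]

lemma trace_rho (M C : Matrix (Fin 2) (Fin 2) ℂ) :
    ((M ⊗ₖ C) * ρState).trace
      = (1/8) * ((M 0 0 + M 0 1 + M 1 0 + M 1 1) * (C 0 0 + C 0 1 + C 1 0 + C 1 1)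
      + (M 0 0 - M 0 1 - M 1 0 + M 1 1) * (C 0 0 - C 0 1 - C 1 0 + C 1 1)) := by
  have h2 : ((Real.sqrt 2 : ℂ)) * ((Real.sqrt 2 : ℂ)) = 2 := by
    norm_cast
    exact Real.mul_self_sqrt (by norm_num)
  have hne : (Real.sqrt 2 : ℂ) ≠ 0 := by
    rw [Complex.ofReal_ne_zero]
    positivity
  simp [ρState, ketbra, vkron, ketP, ketM, Matrix.trace, Matrix.mul_apply, Matrix.vecMulVec_apply,
    Fintype.sum_prod_type, Fin.sum_univ_two, Matrix.kroneckerMap_apply, Matrix.diag, map_inv₀,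
    Complex.conj_ofReal]
  have h4 : (Real.sqrt 2 : ℂ)^4 = 4 := by
    have e : ((Real.sqrt 2:ℂ))^4 = ((Real.sqrt 2:ℂ)*(Real.sqrt 2:ℂ))*((Real.sqrt 2:ℂ)*(Real.sqrt 2:ℂ)) := by
      ring
    rw [e, h2]; norm_num
  field_simp
  ring_nf
  rw [h4]
  ring

lemma psd2 (M : Matrix (Fin 2) (Fin 2) ℂ) (h : M.PosSemidef) :
    0 ≤ (M 0 0).re ∧ 0 ≤ (M 1 1).re ∧ (M 0 1).re^2 ≤ (M 0 0).re * (M 1 1).re := by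
  have h10 : M 1 0 = (starRingEnd ℂ) (M 0 1) := by
    conv_lhs => rw [← h.1]
    simp [Matrix.conjTranspose_apply]
  have hq : ∀ t : ℝ, 0 ≤ (M 0 0).re * (t * t) + 2*(M 0 1).re * t + (M 1 1).re := by
    intro t
    have := h.dotProduct_mulVec_nonneg ![(t:ℂ), 1]
    rw [Complex.le_def] at this
    have hr := this.1
    simp [dotProduct, Matrix.mulVec, Fin.sum_univ_two, h10, Complex.add_re,
      Complex.mul_re, Complex.conj_re, Complex.conj_im] at hr
    nlinarith [hr]
  have h00 : 0 ≤ (M 0 0).re := by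
    have := h.dotProduct_mulVec_nonneg ![1, 0]
    rw [Complex.le_def] at this
    have hr := this.1
    simpa [dotProduct, Matrix.mulVec, Fin.sum_univ_two] using hr
  have h11 : 0 ≤ (M 1 1).re := by simpa using hq 0
  refine ⟨h00, h11, ?_⟩
  have hd := discrim_le_zero (a := (M 0 0).re) (b := 2*(M 0 1).re) (c := (M 1 1).re) hq
  simp [discrim] at hd
  nlinarith [hd]

lemma herm_facts (M : Matrix (Fin 2) (Fin 2) ℂ) (h : M.IsHermitian) :
    M 1 0 = (starRingEnd ℂ) (M 0 1) ∧ (M 0 0).im = 0 ∧ (M 1 1).im = 0 := by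
  refine ⟨?_, ?_, ?_⟩
  · conv_lhs => rw [← h]
    simp [Matrix.conjTranspose_apply]
  · have : M 0 0 = (starRingEnd ℂ) (M 0 0) := by
      conv_lhs => rw [← h]
      simp [Matrix.conjTranspose_apply]
    have := congrArg Complex.im this
    simp [Complex.conj_im] at this
    linarith
  · have : M 1 1 = (starRingEnd ℂ) (M 1 1) := by
      conv_lhs => rw [← h]
      simp [Matrix.conjTranspose_apply]
    have := congrArg Complex.im this
    simp [Complex.conj_im] at this
    linarith

lemma term_re (M N : Matrix (Fin 2) (Fin 2) ℂ) (hM : M.IsHermitian) (hN : N.IsHermitian) :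
    ((1/2 : ℂ) * ((M ⊗ₖ (1 - N)) * ψState).trace
      + (1/2 : ℂ) * ((M ⊗ₖ N) * ρState).trace).re
    = 1/2*(M 0 0).re*(1-(N 0 0).re)
      + 1/8*((M 0 0).re+(M 1 1).re)*((N 0 0).re+(N 1 1).re)
      + 1/2*(M 0 1).re*(N 0 1).re := by
  obtain ⟨hm10, hm00, hm11⟩ := herm_facts M hM
  obtain ⟨hn10, hn00, hn11⟩ := herm_facts N hN
  rw [trace_psi, trace_rho]
  simp only [Matrix.sub_apply, Matrix.one_apply_eq, hm10, hn10]
  simp [Complex.add_re, Complex.sub_re, Complex.mul_re, Complex.mul_im, Complex.add_im,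
    Complex.sub_im, Complex.one_re, Complex.one_im, Complex.conj_re, Complex.conj_im,
    Complex.div_re, Complex.div_im, hm00, hm11, hn00, hn11, Complex.normSq]
  ring

theorem stmt_6 {Λ : Type*} [Fintype Λ] (A B : Λ → Matrix (Fin 2) (Fin 2) ℂ)
    (hA : ∀ l, (A l).PosSemidef) (hAsum : ∑ l, A l = 1)
    (hB : ∀ l, (B l).PosSemidef ∧ (1 - B l).PosSemidef) :
    1/8 ≤ errOneWay A B := by
  have hsum : errOneWay A B = ∑ l, (1/2*((A l) 0 0).re*(1-((B l) 0 0).re)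
      + 1/8*(((A l) 0 0).re+((A l) 1 1).re)*(((B l) 0 0).re+((B l) 1 1).re)
      + 1/2*((A l) 0 1).re*((B l) 0 1).re) := by
    rw [errOneWay, Complex.re_sum]
    exact Finset.sum_congr rfl fun l _ => term_re (A l) (B l) (hA l).1 (hB l).1.1
  have hAsum00 : ∑ l, ((A l) 0 0).re = 1 := by
    have h0 : (∑ l, A l) 0 0 = (1 : Matrix (Fin 2) (Fin 2) ℂ) 0 0 := by rw [hAsum]
    rw [Matrix.sum_apply] at h0
    have h1 := congrArg Complex.re h0
    rw [Complex.re_sum] at h1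
    simpa [Matrix.one_apply] using h1
  have hterm : ∀ l, 1/8 * ((A l) 0 0).re ≤ 1/2*((A l) 0 0).re*(1-((B l) 0 0).re)
      + 1/8*(((A l) 0 0).re+((A l) 1 1).re)*(((B l) 0 0).re+((B l) 1 1).re)
      + 1/2*((A l) 0 1).re*((B l) 0 1).re := by
    intro l
    obtain ⟨ha1, ha2, ha3⟩ := psd2 (A l) (hA l)
    obtain ⟨hb1, hb2, hb3⟩ := psd2 (B l) (hB l).1
    obtain ⟨hc1, hc2, hc3⟩ := psd2 (1 - B l) (hB l).2
    simp only [Matrix.sub_apply, Matrix.one_apply] at hc1 hc2 hc3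
    norm_num at hc1 hc2 hc3
    have := key_ineq (((A l) 0 0).re) (((A l) 0 1).re) (((A l) 1 1).re)
      (((B l) 0 0).re) (((B l) 0 1).re) (((B l) 1 1).re)
      ha1 ha2 ha3 hb1 (by linarith) hb2 (by linarith) hb3 (by nlinarith [hc3])
    nlinarith [this]
  calc (1/8 : ℝ) = ∑ l, 1/8 * ((A l) 0 0).re := by
        rw [← Finset.mul_sum, hAsum00]; norm_num
  _ ≤ _ := by rw [hsum]; exact Finset.sum_le_sum fun l _ => hterm l
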